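/- arXiv:2108.08657 — 4 statements merged into one kernel-verified Lean document; each statement's English description precedes it below -/
import Mathlib

section
/- For every permutation w of [n+2], θ_n(w^r) = (θ_n(w))^r, where w^r denotes the reverse permutation. -/
namespace RSKPaper

/-- Schensted row insertion: the new row, and the bumped entry (if any). -/
def insertRow : List ℕ → ℕ → List ℕ × Option ℕ
  | [], x => ([x], none)
  | y :: ys, x =>
    if x < y then (x :: ys, some y)
    else
      let p := insertRow ys x
      (y :: p.1, p.2)

/-- Schensted insertion of `x` into a tableau (a list of rows). -/
def insertTableau : List (List ℕ) → ℕ → List (List ℕ)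
  | [], x => [[x]]
  | r :: rs, x =>
    match insertRow r x with
    | (r', none) => r' :: rs
    | (r', some y) => r' :: insertTableau rs y

/-- The shape of a tableau: its list of row lengths. -/
def shape (T : List (List ℕ)) : List ℕ := T.map List.length

/-- Index of the first row whose length differs between `P` and `P'`. -/
def diffRow (P P' : List (List ℕ)) : ℕ :=
  (List.range P'.length).findIdx
    (fun i => (P.getD i []).length != (P'.getD i []).length)

/-- Append entry `k` at the end of row `r` of `Q` (creating a new row if needed). -/
def appendAt (Q : List (List ℕ)) (r k : ℕ) : List (List ℕ) :=
  if r < Q.length then Q.set r (Q.getD r [] ++ [k]) else Q ++ [[k]]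

/-- One step of the RSK algorithm on the state `(P, Q, next label)`. -/
def rskStep (st : List (List ℕ) × List (List ℕ) × ℕ) (x : ℕ) :
    List (List ℕ) × List (List ℕ) × ℕ :=
  let P' := insertTableau st.1 x
  (P', appendAt st.2.1 (diffRow st.1 P') st.2.2, st.2.2 + 1)

/-- The insertion tableau `P(w)` of a permutation in one-line notation. -/
def RSKP (w : List ℕ) : List (List ℕ) := (w.foldl rskStep ([], [], 1)).1

/-- The recording tableau `Q(w)` of a permutation in one-line notation. -/
def RSKQ (w : List ℕ) : List (List ℕ) := (w.foldl rskStep ([], [], 1)).2.1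

/-- `w` is a permutation of `[n] = {1, …, n}` written in one-line notation. -/
def IsPerm (n : ℕ) (w : List ℕ) : Prop := w.Perm (List.range' 1 n)

/-- The map `φ_{a,b} : S_n → S_{n+2}`. -/
def phi (a b : ℕ) (w : List ℕ) : List ℕ :=
  a :: (w.map (fun x => if x < min a b then x
    else if x < max a b - 1 then x + 1 else x + 2) ++ [b])

/-- The map `θ_n : S_{n+2} → S_n`. -/
def theta (w : List ℕ) : List ℕ :=
  let c := min (w.headD 0) (w.getLastD 0)
  let d := max (w.headD 0) (w.getLastD 0)
  (w.drop 1).dropLast.map (fun x => if x < c then x else if x < d then x - 1 else x - 2)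

/-- The complement of a permutation of `[n]` in one-line notation. -/
def complement (n : ℕ) (w : List ℕ) : List ℕ := w.map (fun x => n + 1 - x)

/-- The symmetric hook shape `((n+1)/2, 1^{(n-1)/2})` of size `n` (for odd `n`). -/
def hookShape (n : ℕ) : List ℕ := (n + 1) / 2 :: List.replicate ((n - 1) / 2) 1

/-- Conjugate (transpose) of a shape. -/
def conjShape (s : List ℕ) : List ℕ :=
  (List.range (s.headD 0)).map (fun j => s.countP (fun r => decide (j < r)))

def getCell? (T : List (List ℕ)) (i j : ℕ) : Option ℕ := (T.getD i [])[j]?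

def hasCell (T : List (List ℕ)) (i j : ℕ) : Bool := j < (T.getD i []).length

def setCell (T : List (List ℕ)) (i j x : ℕ) : List (List ℕ) :=
  T.set i ((T.getD i []).set j x)

def removeCell (T : List (List ℕ)) (i j : ℕ) : List (List ℕ) :=
  let r := (T.getD i []).take j
  if r.isEmpty then T.take i else T.set i r

/-- Forward jeu de taquin slide with the hole at cell `(i, j)`, with fuel. -/
def slide : ℕ → List (List ℕ) → ℕ → ℕ → List (List ℕ)
  | 0, T, _, _ => T
  | fuel + 1, T, i, j =>
    match getCell? T i (j + 1), getCell? T (i + 1) j with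
    | none, none => removeCell T i j
    | some x, none => slide fuel (setCell T i j x) i (j + 1)
    | none, some y => slide fuel (setCell T i j y) (i + 1) j
    | some x, some y =>
      if x < y then slide fuel (setCell T i j x) i (j + 1)
      else slide fuel (setCell T i j y) (i + 1) j

/-- The number of cells of a tableau. -/
def size (T : List (List ℕ)) : ℕ := (shape T).sum

/-- The delta operator: remove the minimal (top-left) entry and slide. -/
def delta (T : List (List ℕ)) : List (List ℕ) := slide (size T) T 0 0

/-- Entry of the evacuation tableau at cell `(i, j)`:
`n - k` where the cell is vacated when passing from `Δ^k T` to `Δ^(k+1) T`. -/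
def evacEntry (T : List (List ℕ)) (i j : ℕ) : ℕ :=
  size T - (List.range (size T)).countP (fun t => hasCell (delta^[t + 1] T) i j)

/-- The Schützenberger evacuation tableau `ε(T)`. -/
def evacuation (T : List (List ℕ)) : List (List ℕ) :=
  T.mapIdx (fun i row => row.mapIdx (fun j _ => evacEntry T i j))

/-- Transpose of a tableau. -/
def transposeT (T : List (List ℕ)) : List (List ℕ) :=
  (List.range ((T.headD []).length)).map (fun j => T.filterMap (fun row => row[j]?))

/-- `T` is a standard Young tableau (with entries `1, …, size T`). -/
def IsSYT (T : List (List ℕ)) : Prop :=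
  T.Chain' (fun r s => s.length ≤ r.length) ∧
  (∀ r ∈ T, r ≠ []) ∧
  (∀ r ∈ T, r.Chain' (· < ·)) ∧
  (∀ c ∈ transposeT T, c.Chain' (· < ·)) ∧
  T.flatten.Perm (List.range' 1 (size T))

/-- `l` is a partition of `n`. -/
def IsPartition (l : List ℕ) (n : ℕ) : Prop :=
  (∀ x ∈ l, 0 < x) ∧ l.Chain' (fun a b => b ≤ a) ∧ l.sum = n

end RSKPaper

namespace List

variable {α : Type*}

theorem headD_reverse (l : List α) (a : α) : l.reverse.headD a = l.getLastD a := by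
  simp

theorem getLastD_reverse (l : List α) (a : α) : l.reverse.getLastD a = l.headD a := by
  simp

theorem dropLast_tail_reverse (l : List α) :
    l.reverse.tail.dropLast = l.tail.dropLast.reverse := by
  rw [tail_reverse, dropLast_reverse, tail_dropLast]

end List

/- Reversal swaps the first and last letters, which enter `θ` only through their minimum and
maximum, and reverses the middle segment, on which `θ` acts letter by letter. -/
open RSKPaper in
theorem stmt_7_general (w : List ℕ) :
    theta w.reverse = (theta w).reverse := by
  simp only [theta, List.drop_one, List.headD_reverse, List.getLastD_reverse,
    List.dropLast_tail_reverse, Nat.min_comm (w.getLastD 0), Nat.max_comm (w.getLastD 0),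
    List.map_reverse]

open RSKPaper in
/-- `θ_n` commutes with reversal. -/
theorem stmt_7 (n : ℕ) (w : List ℕ) (hw : IsPerm (n + 2) w) :
    theta w.reverse = (theta w).reverse :=
  stmt_7_general w
end

section
/- For every permutation w of [n+2], θ_n(w^c) = (θ_n(w))^c, where w^c denotes the complement permutation. -/
namespace RSKPaper

/-- The relabelling of the inner entries performed by `θ` when the endpoints are `a` and `b`. -/
def thetaShift (a b x : ℕ) : ℕ :=
  if x < min a b then x else if x < max a b then x - 1 else x - 2

theorem theta_cons_append_singleton (a b : ℕ) (l : List ℕ) :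
    theta (a :: (l ++ [b])) = l.map (thetaShift a b) := by
  have hlast : (a :: (l ++ [b])).getLastD 0 = b := by
    rw [← List.cons_append, List.getLastD_concat]
  simp only [theta, hlast, List.headD_cons, List.drop_succ_cons, List.drop_zero,
    List.dropLast_concat]
  rfl

/-- Complementation reverses the order of the values, so it swaps the two ranges `x < min` and
`max < x` and fixes the middle range; the shifts by `0` and `2` then trade places. -/
theorem thetaShift_complement {m a b x : ℕ} (ha : a ≤ m + 2) (hb : b ≤ m + 2) (hx : x ≤ m + 2)
    (hab : a ≠ b) (hxa : x ≠ a) (hxb : x ≠ b) :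
    thetaShift (m + 3 - a) (m + 3 - b) (m + 3 - x) = m + 1 - thetaShift a b x := by
  unfold thetaShift
  split_ifs <;> omega

theorem theta_complement {m : ℕ} {w : List ℕ} (hnd : w.Nodup) (hle : ∀ x ∈ w, x ≤ m + 2) :
    theta (complement (m + 2) w) = complement m (theta w) := by
  rcases w with _ | ⟨a, t⟩
  · rfl
  rcases t.eq_nil_or_concat' with rfl | ⟨l, b, rfl⟩
  · rfl
  simp only [List.nodup_cons, List.nodup_append, List.mem_append, List.mem_singleton, not_or,
    forall_eq] at hnd
  obtain ⟨⟨hal, hab⟩, -, -, hlb⟩ := hnd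
  have hcompl : complement (m + 2) (a :: (l ++ [b]))
      = (m + 3 - a) :: (l.map (m + 3 - ·) ++ [m + 3 - b]) := by
    simp [complement]
  rw [hcompl, theta_cons_append_singleton, theta_cons_append_singleton, complement, List.map_map,
    List.map_map]
  exact List.map_congr_left fun x hx => thetaShift_complement (hle a (by simp))
    (hle b (by simp)) (hle x (by simp [hx])) hab (ne_of_mem_of_not_mem hx hal) (hlb x hx)

end RSKPaper

open RSKPaper in
/-- `θ_n` commutes with complementation. -/
theorem stmt_8 (n : ℕ) (w : List ℕ) (hw : IsPerm (n + 2) w) :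
    theta (complement (n + 2) w) = complement n (theta w) :=
  theta_complement (hw.nodup_iff.mpr (List.nodup_range' ..))
    fun x hx => by have := List.mem_range'.mp (hw.mem_iff.mp hx); omega
end

section
/- For every even n, there are no permutations w ∈ S_n with Q(w) = Q(w^r). -/
namespace RSKPaper

section insertRow

variable {R : List ℕ} {x : ℕ}

lemma mem_insertRow_fst {e : ℕ} (he : e ∈ (insertRow R x).1) : e = x ∨ e ∈ R := by
  induction R with
  | nil => simpa [insertRow] using he
  | cons y ys ih =>
    unfold insertRow at he
    split_ifs at he
    · simp only [List.mem_cons] at he ⊢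
      exact he.imp_right Or.inr
    · simp only [List.mem_cons] at he ⊢
      rcases he with rfl | he
      · exact Or.inr (Or.inl rfl)
      · exact (ih he).imp_right Or.inr

lemma self_mem_insertRow_fst : x ∈ (insertRow R x).1 := by
  induction R with
  | nil => simp [insertRow]
  | cons y ys ih =>
    unfold insertRow
    split_ifs <;> simp [ih]

lemma insertRow_snd_eq_none_iff : (insertRow R x).2 = none ↔ ∀ e ∈ R, e ≤ x := by
  induction R with
  | nil => simp [insertRow]
  | cons y ys ih =>
    unfold insertRow
    split_ifs with hxy
    · simp only [List.mem_cons, forall_eq_or_imp, false_iff, not_and]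
      exact fun hyx => absurd hxy (not_lt.2 hyx)
    · simp [ih, not_lt.1 hxy]

lemma insertRow_snd_eq_some {z : ℕ} (h : (insertRow R x).2 = some z) : z ∈ R ∧ x < z := by
  induction R with
  | nil => simp [insertRow] at h
  | cons y ys ih =>
    unfold insertRow at h
    split_ifs at h with hxy
    · simp only [Option.some.injEq] at h
      subst h
      simpa using hxy
    · simp [ih h]

lemma insertRow_snd_le_of_lt {z e : ℕ} (hR : R.Pairwise (· ≤ ·))
    (h : (insertRow R x).2 = some z) (he : e ∈ R) (hxe : x < e) : z ≤ e := by
  induction R with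
  | nil => simp at he
  | cons y ys ih =>
    rw [List.pairwise_cons] at hR
    unfold insertRow at h
    split_ifs at h with hxy
    · simp only [Option.some.injEq] at h
      subst h
      rcases List.mem_cons.1 he with rfl | he
      · exact le_rfl
      · exact hR.1 e he
    · rcases List.mem_cons.1 he with rfl | he
      · exact absurd hxe hxy
      · exact ih hR.2 h he

lemma pairwise_insertRow_fst (hR : R.Pairwise (· ≤ ·)) :
    (insertRow R x).1.Pairwise (· ≤ ·) := by
  induction R with
  | nil => simp [insertRow]
  | cons y ys ih =>
    rw [List.pairwise_cons] at hR
    unfold insertRow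
    split_ifs with hxy
    · exact List.pairwise_cons.2 ⟨fun e he => hxy.le.trans (hR.1 e he), hR.2⟩
    · refine List.pairwise_cons.2 ⟨fun e he => ?_, ih hR.2⟩
      rcases mem_insertRow_fst he with rfl | he
      · exact not_lt.1 hxy
      · exact hR.1 e he

lemma length_insertRow_fst_eq_iff :
    (insertRow R x).1.length = R.length ↔ (insertRow R x).2.isSome := by
  induction R with
  | nil => simp [insertRow]
  | cons y ys ih =>
    unfold insertRow
    split_ifs <;> simp [ih]

end insertRow

lemma diffRow_cons (R R' : List ℕ) (rs rs' : List (List ℕ)) :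
    diffRow (R :: rs) (R' :: rs') = if R.length = R'.length then diffRow rs rs' + 1 else 0 := by
  unfold diffRow
  rw [List.length_cons, List.range_succ_eq_map, List.findIdx_cons]
  split_ifs with h
  · simp [h, List.findIdx_map, Function.comp_def]
  · have hne : (R.length != R'.length) = true := bne_iff_ne.2 h
    simp [hne]

/-- The row in which inserting `x` into `T` creates a new cell. -/
def insertionRow (T : List (List ℕ)) (x : ℕ) : ℕ := diffRow T (insertTableau T x)

section insertTableau

variable {T : List (List ℕ)} {R : List ℕ} {rs : List (List ℕ)} {x z : ℕ}

lemma insertTableau_cons_of_none (h : (insertRow R x).2 = none) :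
    insertTableau (R :: rs) x = (insertRow R x).1 :: rs := by
  rcases hI : insertRow R x with ⟨R', o⟩
  rw [hI] at h
  subst h
  simp [insertTableau, hI]

lemma insertTableau_cons_of_some (h : (insertRow R x).2 = some z) :
    insertTableau (R :: rs) x = (insertRow R x).1 :: insertTableau rs z := by
  rcases hI : insertRow R x with ⟨R', o⟩
  rw [hI] at h
  subst h
  simp [insertTableau, hI]

lemma insertionRow_nil (x : ℕ) : insertionRow [] x = 0 := rfl

lemma insertionRow_cons_of_none (h : (insertRow R x).2 = none) :
    insertionRow (R :: rs) x = 0 := by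
  have hlen : R.length ≠ (insertRow R x).1.length := fun hl =>
    by simpa [h] using length_insertRow_fst_eq_iff.1 hl.symm
  rw [insertionRow, insertTableau_cons_of_none h, diffRow_cons, if_neg hlen]

lemma insertionRow_cons_of_some (h : (insertRow R x).2 = some z) :
    insertionRow (R :: rs) x = insertionRow rs z + 1 := by
  have hlen : R.length = (insertRow R x).1.length :=
    (length_insertRow_fst_eq_iff.2 (by simp [h])).symm
  rw [insertionRow, insertTableau_cons_of_some h, diffRow_cons, if_pos hlen, insertionRow]

lemma insertionRow_le_length (T : List (List ℕ)) (x : ℕ) : insertionRow T x ≤ T.length := by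
  induction T generalizing x with
  | nil => exact le_rfl
  | cons R rs ih =>
    rcases h : (insertRow R x).2 with _ | z
    · simp [insertionRow_cons_of_none h]
    · simpa [insertionRow_cons_of_some h] using ih z

lemma length_insertTableau (T : List (List ℕ)) (x : ℕ) :
    (insertTableau T x).length =
      if insertionRow T x < T.length then T.length else T.length + 1 := by
  induction T generalizing x with
  | nil => rfl
  | cons R rs ih =>
    rcases h : (insertRow R x).2 with _ | z
    · simp [insertionRow_cons_of_none h, insertTableau_cons_of_none h]
    · simp only [insertionRow_cons_of_some h, insertTableau_cons_of_some h,
        List.length_cons, ih z, Nat.add_lt_add_iff_right]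
      split_ifs <;> rfl

lemma pairwise_insertTableau (hT : ∀ R ∈ T, R.Pairwise (· ≤ ·)) :
    ∀ R ∈ insertTableau T x, R.Pairwise (· ≤ ·) := by
  induction T generalizing x with
  | nil => simp [insertTableau]
  | cons R rs ih =>
    have hR := hT R (by simp)
    have hrs : ∀ S ∈ rs, S.Pairwise (· ≤ ·) := fun S hS => hT S (by simp [hS])
    rcases h : (insertRow R x).2 with _ | z
    · rw [insertTableau_cons_of_none h]
      simpa [pairwise_insertRow_fst hR] using hrs
    · rw [insertTableau_cons_of_some h]
      simpa [pairwise_insertRow_fst hR] using ih hrs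

end insertTableau

section rowBumping

variable {T : List (List ℕ)} {x y : ℕ}

theorem insertionRow_insertTableau_le (hT : ∀ R ∈ T, R.Pairwise (· ≤ ·)) (hxy : x ≤ y) :
    insertionRow (insertTableau T x) y ≤ insertionRow T x := by
  induction T generalizing x y with
  | nil =>
    have h : (insertRow [x] y).2 = none := insertRow_snd_eq_none_iff.2 (by simpa using hxy)
    exact (insertionRow_cons_of_none h).le
  | cons R rs ih =>
    have hR := hT R (by simp)
    rcases hx : (insertRow R x).2 with _ | z
    · have hy : (insertRow (insertRow R x).1 y).2 = none := by
        refine insertRow_snd_eq_none_iff.2 fun e he => ?_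
        rcases mem_insertRow_fst he with rfl | he
        · exact hxy
        · exact (insertRow_snd_eq_none_iff.1 hx e he).trans hxy
      rw [insertTableau_cons_of_none hx, insertionRow_cons_of_none hy]
      exact Nat.zero_le _
    rw [insertTableau_cons_of_some hx, insertionRow_cons_of_some hx]
    rcases hy : (insertRow (insertRow R x).1 y).2 with _ | z'
    · rw [insertionRow_cons_of_none hy]
      exact Nat.zero_le _
    -- `z'` lies strictly right of `x` in the new row, hence weakly right of `z` in the old one.
    obtain ⟨hz'mem, hyz'⟩ := insertRow_snd_eq_some hy
    have hz'R : z' ∈ R := (mem_insertRow_fst hz'mem).resolve_left (by omega)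
    have hzz' : z ≤ z' := insertRow_snd_le_of_lt hR hx hz'R (by omega)
    rw [insertionRow_cons_of_some hy]
    exact Nat.add_le_add_right (ih (fun S hS => hT S (by simp [hS])) hzz') 1

theorem insertionRow_lt_insertionRow_insertTableau (hT : ∀ R ∈ T, R.Pairwise (· ≤ ·))
    (hyx : y < x) : insertionRow T x < insertionRow (insertTableau T x) y := by
  induction T generalizing x y with
  | nil =>
    have h : (insertRow [x] y).2 = some x := by simp [insertRow, hyx]
    rw [insertionRow_nil]
    exact (insertionRow_cons_of_some h).symm ▸ Nat.succ_pos _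
  | cons R rs ih =>
    have hR := hT R (by simp)
    have hy_bumps : ∃ z', (insertRow (insertRow R x).1 y).2 = some z' := by
      refine Option.ne_none_iff_exists'.1 fun hy => ?_
      have := insertRow_snd_eq_none_iff.1 hy x self_mem_insertRow_fst
      omega
    obtain ⟨z', hy⟩ := hy_bumps
    rcases hx : (insertRow R x).2 with _ | z
    · rw [insertionRow_cons_of_none hx, insertTableau_cons_of_none hx,
        insertionRow_cons_of_some hy]
      exact Nat.succ_pos _
    -- `z'` lies weakly left of `x` in the new row, hence strictly left of `z`.
    have hz'x : z' ≤ x := insertRow_snd_le_of_lt (pairwise_insertRow_fst hR) hy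
      self_mem_insertRow_fst hyx
    have hz'z : z' < z := hz'x.trans_lt (insertRow_snd_eq_some hx).2
    rw [insertionRow_cons_of_some hx, insertTableau_cons_of_some hx,
      insertionRow_cons_of_some hy]
    exact Nat.add_lt_add_right (ih (fun S hS => hT S (by simp [hS])) hz'z) 1

end rowBumping

def rowOf (Q : List (List ℕ)) (k : ℕ) : ℕ := Q.findIdx (k ∈ ·)

section appendAt

variable {Q : List (List ℕ)} {r m k : ℕ}

lemma appendAt_nil (r m : ℕ) : appendAt [] r m = [[m]] := by simp [appendAt]

lemma appendAt_cons_zero (q : List ℕ) (Q : List (List ℕ)) (m : ℕ) :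
    appendAt (q :: Q) 0 m = (q ++ [m]) :: Q := by
  simp [appendAt]

lemma appendAt_cons_succ (q : List ℕ) (Q : List (List ℕ)) (r m : ℕ) :
    appendAt (q :: Q) (r + 1) m = q :: appendAt Q r m := by
  unfold appendAt
  by_cases h : r < Q.length <;> simp [h]

lemma length_appendAt (Q : List (List ℕ)) (r m : ℕ) :
    (appendAt Q r m).length = if r < Q.length then Q.length else Q.length + 1 := by
  unfold appendAt
  split_ifs <;> simp

lemma mem_flatten_appendAt {e : ℕ} :
    e ∈ (appendAt Q r m).flatten ↔ e ∈ Q.flatten ∨ e = m := by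
  induction Q generalizing r with
  | nil => simp [appendAt_nil]
  | cons q Q ih =>
    cases r with
    | zero => simp [appendAt_cons_zero, or_comm, or_left_comm]
    | succ r => simp [appendAt_cons_succ, ih, or_assoc]

lemma rowOf_appendAt_of_ne (hk : k ∈ Q.flatten) (hne : k ≠ m) :
    rowOf (appendAt Q r m) k = rowOf Q k := by
  induction Q generalizing r with
  | nil => simp at hk
  | cons q Q ih =>
    cases r with
    | zero => simp [rowOf, appendAt_cons_zero, List.findIdx_cons, hne]
    | succ r =>
      by_cases hq : k ∈ q
      · simp [rowOf, appendAt_cons_succ, List.findIdx_cons, hq]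
      · have hkQ : k ∈ Q.flatten := by simpa [hq] using hk
        simpa [rowOf, appendAt_cons_succ, List.findIdx_cons, hq] using ih hkQ

lemma rowOf_appendAt_self (hm : m ∉ Q.flatten) (hr : r ≤ Q.length) :
    rowOf (appendAt Q r m) m = r := by
  induction Q generalizing r with
  | nil =>
    obtain rfl : r = 0 := by simpa using hr
    simp [rowOf, appendAt_nil]
  | cons q Q ih =>
    cases r with
    | zero => simp [rowOf, appendAt_cons_zero, List.findIdx_cons]
    | succ r =>
      have hmq : m ∉ q := fun h => hm (by simp [h])
      have := ih (fun h => hm (by simp [h])) (by simpa using hr)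
      simpa [rowOf, appendAt_cons_succ, List.findIdx_cons, hmq] using this

end appendAt

/-- `st = (P, Q, m)`, where `m` is the next label to record. -/
def IsRSKState (st : List (List ℕ) × List (List ℕ) × ℕ) : Prop :=
  st.2.1.length = st.1.length ∧ ∀ e ∈ st.2.1.flatten, e < st.2.2

section rskStep

variable {st : List (List ℕ) × List (List ℕ) × ℕ}

lemma isRSKState_init : IsRSKState ([], [], 1) := by simp [IsRSKState]

lemma isRSKState_rskStep (h : IsRSKState st) (x : ℕ) : IsRSKState (rskStep st x) := by
  obtain ⟨hlen, hlt⟩ := h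
  refine ⟨?_, fun e he => ?_⟩
  · simp only [rskStep, length_appendAt, length_insertTableau, hlen]
    rfl
  · rcases mem_flatten_appendAt.1 he with he | rfl
    · exact (hlt e he).trans (Nat.lt_succ_self _)
    · exact Nat.lt_succ_self _

lemma isRSKState_foldl (h : IsRSKState st) (u : List ℕ) : IsRSKState (u.foldl rskStep st) := by
  induction u generalizing st with
  | nil => exact h
  | cons x u ih => exact ih (isRSKState_rskStep h x)

lemma foldl_rskStep_label (st : List (List ℕ) × List (List ℕ) × ℕ) (u : List ℕ) :
    (u.foldl rskStep st).2.2 = st.2.2 + u.length := by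
  induction u generalizing st with
  | nil => rfl
  | cons x u ih => simp only [List.foldl_cons, ih, List.length_cons, rskStep]; omega

lemma rowOf_rskStep_label (h : IsRSKState st) (x : ℕ) :
    rowOf (rskStep st x).2.1 st.2.2 = insertionRow st.1 x :=
  rowOf_appendAt_self (fun hm => (h.2 _ hm).false)
    (h.1 ▸ insertionRow_le_length st.1 x)

lemma rowOf_foldl_rskStep (h : IsRSKState st) (u : List ℕ) {k : ℕ}
    (hk : k ∈ st.2.1.flatten) : rowOf (u.foldl rskStep st).2.1 k = rowOf st.2.1 k := by
  induction u generalizing st with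
  | nil => rfl
  | cons x u ih =>
    rw [List.foldl_cons, ih (isRSKState_rskStep h x) (mem_flatten_appendAt.2 (Or.inl hk))]
    exact rowOf_appendAt_of_ne hk (h.2 k hk).ne

end rskStep

lemma RSKP_append_singleton (u : List ℕ) (x : ℕ) :
    RSKP (u ++ [x]) = insertTableau (RSKP u) x := by
  simp [RSKP, rskStep]

lemma pairwise_RSKP (u : List ℕ) : ∀ R ∈ RSKP u, R.Pairwise (· ≤ ·) := by
  induction u using List.reverseRecOn with
  | nil => simp [RSKP]
  | append_singleton u x ih => exact RSKP_append_singleton u x ▸ pairwise_insertTableau ih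

theorem rowOf_RSKQ_append_cons (u v : List ℕ) (x : ℕ) :
    rowOf (RSKQ (u ++ x :: v)) (u.length + 1) = insertionRow (RSKP u) x := by
  have h := isRSKState_foldl isRSKState_init u
  have hlabel : (u.foldl rskStep ([], [], 1)).2.2 = u.length + 1 := by
    rw [foldl_rskStep_label, add_comm]
  rw [RSKQ, List.foldl_append, List.foldl_cons, ← hlabel,
    rowOf_foldl_rskStep (isRSKState_rskStep h x) v (mem_flatten_appendAt.2 (Or.inr rfl)),
    rowOf_rskStep_label h]
  rfl

theorem rowOf_RSKQ_lt_iff (u v : List ℕ) (a b : ℕ) :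
    rowOf (RSKQ (u ++ a :: b :: v)) (u.length + 1) <
        rowOf (RSKQ (u ++ a :: b :: v)) (u.length + 2) ↔ b < a := by
  have hb : rowOf (RSKQ (u ++ a :: b :: v)) (u.length + 2) =
      insertionRow (insertTableau (RSKP u) a) b := by
    simpa [← RSKP_append_singleton] using rowOf_RSKQ_append_cons (u ++ [a]) v b
  rw [rowOf_RSKQ_append_cons, hb]
  refine ⟨fun hlt => not_le.1 fun hab => ?_,
    insertionRow_lt_insertionRow_insertTableau (pairwise_RSKP u)⟩
  exact absurd hlt (not_lt.2 (insertionRow_insertTableau_le (pairwise_RSKP u) hab))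

end RSKPaper

open RSKPaper in
/-- for even `n` (`n ≥ 1`) there is no `w ∈ S_n` with
`Q(w) = Q(w^r)`. -/
theorem stmt_13 (n : ℕ) (hn : Even n) (hn1 : 1 ≤ n) :
    ¬ ∃ w : List ℕ, IsPerm n w ∧ RSKQ w = RSKQ w.reverse := by
  rintro ⟨w, hperm, hQ⟩
  obtain ⟨k, rfl⟩ := hn
  obtain ⟨j, rfl⟩ : ∃ j, k = j + 1 := ⟨k - 1, by omega⟩
  have hlen : w.length = j + 1 + (j + 1) := by simpa using hperm.length_eq
  have hnd : w.Nodup := hperm.nodup_iff.2 List.nodup_range'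
  obtain ⟨u, a, b, v, rfl, huv⟩ :
      ∃ u a b v, w = u ++ a :: b :: v ∧ u.length = v.length := by
    refine ⟨w.take j, w[j], w[j + 1], w.drop (j + 2), ?_, by simp; omega⟩
    conv_lhs => rw [← List.take_append_drop j w, List.drop_eq_getElem_cons (by omega),
      List.drop_eq_getElem_cons (by omega)]
  have hab : a ≠ b := fun h => (List.nodup_cons.1 hnd.of_append_right).1 (by simp [h])
  have hrev : (u ++ a :: b :: v).reverse = v.reverse ++ b :: a :: u.reverse := by simp
  have hdesc := rowOf_RSKQ_lt_iff u v a b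
  have hdesc_rev := rowOf_RSKQ_lt_iff v.reverse u.reverse b a
  rw [← hrev, ← hQ, List.length_reverse, ← huv] at hdesc_rev
  rcases lt_or_gt_of_ne hab with hlt | hlt
  · exact lt_asymm hlt (hdesc.1 (hdesc_rev.2 hlt))
  · exact lt_asymm hlt (hdesc_rev.1 (hdesc.2 hlt))
end

section
/- For odd n and λ = ((n+1)/2, 1^{(n−1)/2}), a standard Young tableau P of shape λ satisfies ε(P)^T = P (where ε is evacuation and T is transpose) if and only if for every i ∈ [n] with i > 1, the presence of i in the first row of P implies that n−i+2 is in the first column of P. -/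
/-!
A standard tableau of hook shape is its corner `1` together with an arm `A` (rest of the first
row) and a leg `B` (rest of the first column), two increasing lists partitioning `{2, …, n}`.
On a hook, `Δ` deletes the corner and slides the smallest remaining entry into it, shortening
the arm or the leg accordingly; by induction, `ε` of the hook `(A, B)` is the hook whose arm and
leg are `A` and `B` reversed and mapped by `x ↦ n + 2 - x`. Hence `ε(P)ᵀ = P` says that this
order-reversing involution maps `A` onto `B` (reversed), which for increasing lists of the same
length amounts to mapping `A` into `B`.
-/

namespace RSKPaper

open List

def hookTableau (r₀ : ℕ) (A B : List ℕ) : List (List ℕ) :=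
  (r₀ :: A) :: B.map (fun b => [b])

section HookTableau

variable (r₀ : ℕ) (A B : List ℕ)

@[simp] lemma size_hookTableau : size (hookTableau r₀ A B) = A.length + B.length + 1 := by
  simp [size, shape, hookTableau, Function.comp_def]
  omega

lemma headD_hookTableau : (hookTableau r₀ A B).headD [] = r₀ :: A := rfl

lemma filterMap_head?_hookTableau :
    (hookTableau r₀ A B).filterMap (fun r => r.head?) = r₀ :: B := by
  simp [hookTableau, filterMap_map, Function.comp_def]

lemma flatten_hookTableau : (hookTableau r₀ A B).flatten = r₀ :: (A ++ B) := by
  simp [hookTableau, ← flatMap_def]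

lemma transposeT_hookTableau : transposeT (hookTableau r₀ A B) = hookTableau r₀ B A := by
  simp only [transposeT, hookTableau, headD_cons, length_cons, range_succ_eq_map, map_cons, map_map]
  refine congrArg₂ _ (by simp [filterMap_map]) (ext_getElem (by simp) fun j _ h => ?_)
  rw [length_map] at h
  simp [filterMap_cons, Function.comp_def, getElem?_eq_getElem h]

lemma hasCell_hookTableau_zero (j : ℕ) :
    hasCell (hookTableau r₀ A B) 0 j ↔ j < A.length + 1 := by
  simp [hasCell, hookTableau]

lemma hasCell_hookTableau_succ_zero (i : ℕ) :
    hasCell (hookTableau r₀ A B) (i + 1) 0 ↔ i < B.length := by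
  rcases lt_or_ge i B.length with h | h <;>
    simp [hasCell, hookTableau, getD_eq_getElem?_getD, h]

end HookTableau

lemma hookTableau_inj {r₀ r₀' : ℕ} {A B A' B' : List ℕ} :
    hookTableau r₀ A B = hookTableau r₀' A' B' ↔ r₀ = r₀' ∧ A = A' ∧ B = B' := by
  simp [hookTableau, map_inj_right, and_assoc]

lemma exists_eq_map_singleton {α : Type*} {L : List (List α)} {l : ℕ}
    (h : L.map length = replicate l 1) :
    ∃ B : List α, L = B.map (fun b => [b]) ∧ B.length = l := by
  induction L generalizing l with
  | nil => exact ⟨[], rfl, by simpa using congrArg length h⟩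
  | cons r L ih =>
    obtain _ | l := l
    · simp at h
    obtain ⟨hr, hL⟩ := cons.inj h
    obtain ⟨b, rfl⟩ := length_eq_one_iff.mp hr
    obtain ⟨B, rfl, rfl⟩ := ih hL
    exact ⟨b :: B, rfl, rfl⟩

lemma exists_eq_hookTableau {T : List (List ℕ)} {k l : ℕ}
    (h : shape T = (k + 1) :: replicate l 1) :
    ∃ r₀ A B, T = hookTableau r₀ A B ∧ A.length = k ∧ B.length = l := by
  obtain _ | ⟨_ | ⟨r₀, A⟩, rest⟩ := T
  · simp [shape] at h
  · simp [shape] at h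
  obtain ⟨hA, hrest⟩ := cons.inj h
  obtain ⟨B, rfl, hB⟩ := exists_eq_map_singleton hrest
  exact ⟨r₀, A, B, rfl, by simpa using hA, hB⟩

lemma getCell?_eq_none {T : List (List ℕ)} {i j : ℕ} (h : (T.getD i []).length ≤ j) :
    getCell? T i j = none :=
  getElem?_eq_none h

lemma slide_row {rest : List (List ℕ)} (hrest : ∀ r ∈ rest, r.length ≤ 1) (v u : List ℕ)
    (y fuel : ℕ) (hu : u ≠ []) (hfuel : v.length < fuel) :
    slide fuel ((u ++ y :: v) :: rest) 0 u.length = (u ++ v) :: rest := by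
  have below : ∀ (row : List ℕ) (j : ℕ), 1 ≤ j → getCell? (row :: rest) 1 j = none := by
    intro row j hj
    refine getCell?_eq_none ?_
    cases rest with
    | nil => simp
    | cons r _ => exact (hrest r mem_cons_self).trans hj
  induction v generalizing u y fuel with
  | nil =>
    obtain ⟨f, rfl⟩ := Nat.exists_eq_add_one_of_ne_zero (by omega : fuel ≠ 0)
    rw [slide, getCell?_eq_none (by simp), below _ _ (length_pos_iff.mpr hu)]
    simp [removeCell, hu]
  | cons x v ih =>
    obtain ⟨f, rfl⟩ := Nat.exists_eq_add_one_of_ne_zero (by omega : fuel ≠ 0)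
    have hright : getCell? ((u ++ y :: x :: v) :: rest) 0 (u.length + 1) = some x := by
      simp [getCell?]
    rw [slide, hright, below _ _ (length_pos_iff.mpr hu)]
    have hset : setCell ((u ++ y :: x :: v) :: rest) 0 u.length x
        = ((u ++ [x]) ++ x :: v) :: rest := by
      simp [setCell, set_append_right]
    simpa [hset] using ih (u ++ [x]) x f (by simp) (by simpa using hfuel)

lemma slide_col (row₀ v u : List ℕ) (y fuel : ℕ) (hfuel : v.length < fuel) :
    slide fuel (row₀ :: (u ++ y :: v).map (fun b => [b])) (u.length + 1) 0
      = row₀ :: (u ++ v).map (fun b => [b]) := by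
  induction v generalizing u y fuel with
  | nil =>
    obtain ⟨f, rfl⟩ := Nat.exists_eq_add_one_of_ne_zero (by omega : fuel ≠ 0)
    rw [slide, getCell?_eq_none (by simp [getD_eq_getElem?_getD]),
      getCell?_eq_none (by simp [getD_eq_getElem?_getD])]
    simp [removeCell, getD_eq_getElem?_getD]
  | cons x v ih =>
    obtain ⟨f, rfl⟩ := Nat.exists_eq_add_one_of_ne_zero (by omega : fuel ≠ 0)
    have hbelow : getCell? (row₀ :: (u ++ y :: x :: v).map (fun b => [b])) (u.length + 2) 0
        = some x := by
      simp [getCell?, getD_eq_getElem?_getD]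
    rw [slide, getCell?_eq_none (by simp [getD_eq_getElem?_getD]), hbelow]
    have hset : setCell (row₀ :: (u ++ y :: x :: v).map (fun b => [b])) (u.length + 1) 0 x
        = row₀ :: ((u ++ [x]) ++ x :: v).map (fun b => [b]) := by
      simp [setCell, getD_eq_getElem?_getD, set_append_right]
    dsimp only
    rw [hset]
    simpa using ih (u ++ [x]) x f (by simpa using hfuel)

lemma delta_hookTableau_cons_row {r₀ a : ℕ} {A B : List ℕ} (h : ∀ b ∈ B, a < b) :
    delta (hookTableau r₀ (a :: A) B) = hookTableau a A B := by
  have hslide : slide (A.length + B.length + 1) (setCell (hookTableau r₀ (a :: A) B) 0 0 a) 0 1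
      = hookTableau a A B :=
    slide_row (by simp) A [a] a _ (cons_ne_nil _ _) (by omega)
  rw [delta, size_hookTableau, length_cons, show A.length + 1 + B.length + 1
    = (A.length + B.length + 1) + 1 by omega, slide]
  cases B with
  | nil => exact hslide
  | cons b B => exact if_pos (h b mem_cons_self) |>.trans hslide

lemma delta_hookTableau_cons_col {r₀ b : ℕ} {A B : List ℕ} (h : ∀ a ∈ A, b < a) :
    delta (hookTableau r₀ A (b :: B)) = hookTableau b A B := by
  have hslide : slide (A.length + B.length + 1) (setCell (hookTableau r₀ A (b :: B)) 0 0 b) 1 0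
      = hookTableau b A B :=
    slide_col (b :: A) B [] b _ (by omega)
  rw [delta, size_hookTableau, length_cons, show A.length + (B.length + 1) + 1
    = (A.length + B.length + 1) + 1 by omega, slide]
  cases A with
  | nil => exact hslide
  | cons a A => exact if_neg (not_lt.mpr (h a mem_cons_self).le) |>.trans hslide

lemma length_getD_setCell (T : List (List ℕ)) (a b x i : ℕ) :
    ((setCell T a b x).getD i []).length = (T.getD i []).length := by
  rcases eq_or_ne a i with rfl | h
  · simp only [setCell, getD_eq_getElem?_getD, getElem?_set_self']
    cases T[a]? <;> simp
  · simp [setCell, getD_eq_getElem?_getD, getElem?_set_ne h]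

lemma length_getD_removeCell_le (T : List (List ℕ)) (a b i : ℕ) :
    ((removeCell T a b).getD i []).length ≤ (T.getD i []).length := by
  simp only [removeCell]
  split_ifs
  · simp only [getD_eq_getElem?_getD, getElem?_take]
    split_ifs <;> simp
  · rcases eq_or_ne a i with rfl | h
    · simp only [getD_eq_getElem?_getD, getElem?_set_self']
      cases T[a]? <;> simp
    · simp [getD_eq_getElem?_getD, getElem?_set_ne h]

lemma hasCell_of_hasCell_slide {fuel : ℕ} {T : List (List ℕ)} {a b i j : ℕ}
    (h : hasCell (slide fuel T a b) i j) : hasCell T i j := by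
  induction fuel generalizing T a b with
  | zero => exact h
  | succ f ih =>
    have ih' : ∀ {a' b' x}, hasCell (slide f (setCell T a b x) a' b') i j → hasCell T i j := by
      intro a' b' x h'
      simpa only [hasCell, length_getD_setCell] using ih h'
    rw [slide] at h
    split at h
    · simp only [hasCell, decide_eq_true_eq] at h ⊢
      exact h.trans_le (length_getD_removeCell_le T a b i)
    · exact ih' h
    · exact ih' h
    · split at h <;> exact ih' h

lemma hasCell_of_hasCell_delta_iterate {T : List (List ℕ)} {t i j : ℕ}
    (h : hasCell (delta^[t] T) i j) : hasCell T i j := by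
  induction t generalizing T with
  | zero => exact h
  | succ t ih => exact hasCell_of_hasCell_slide (ih (Function.iterate_succ_apply delta t T ▸ h))

lemma evacEntry_of_hasCell_delta {T T' : List (List ℕ)} {i j : ℕ} (hΔ : delta T = T')
    (hsize : size T = size T' + 1) (h : hasCell T' i j) : evacEntry T i j = evacEntry T' i j := by
  subst hΔ
  rw [evacEntry, hsize, range_succ_eq_map, countP_cons_of_pos (by simpa using h), countP_map]
  simp only [evacEntry, Function.comp_def, Function.iterate_succ_apply]
  omega

lemma evacEntry_of_not_hasCell_delta {T T' : List (List ℕ)} {i j : ℕ} (hΔ : delta T = T')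
    (h : hasCell T' i j = false) : evacEntry T i j = size T := by
  subst hΔ
  suffices hzero : (range (size T)).countP (fun t => hasCell (delta^[t + 1] T) i j) = 0 by
    rw [evacEntry, hzero, Nat.sub_zero]
  refine countP_eq_zero.mpr fun t _ ht => ?_
  rw [Function.iterate_succ_apply] at ht
  simp [hasCell_of_hasCell_delta_iterate ht] at h

lemma evacuation_hookTableau_eq_evacEntry (r₀ : ℕ) (A B : List ℕ) :
    evacuation (hookTableau r₀ A B) =
      hookTableau (evacEntry (hookTableau r₀ A B) 0 0)
        ((range A.length).map fun j => evacEntry (hookTableau r₀ A B) 0 (j + 1))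
        ((range B.length).map fun i => evacEntry (hookTableau r₀ A B) (i + 1) 0) := by
  refine ext_getElem (by simp [hookTableau, evacuation]) fun i _ _ => ?_
  rcases i with _ | i
  · refine ext_getElem (by simp [hookTableau, evacuation]) fun j _ _ => ?_
    rcases j with _ | j <;> simp [hookTableau, evacuation]
  · simp [hookTableau, evacuation]

lemma evacuation_hookTableau_cons_row {r₀ a e : ℕ} {A B X Y : List ℕ}
    (hlt : ∀ b ∈ B, a < b) (hev : evacuation (hookTableau a A B) = hookTableau e X Y) :
    evacuation (hookTableau r₀ (a :: A) B)
      = hookTableau e (X ++ [A.length + B.length + 2]) Y := by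
  have hdel : delta (hookTableau r₀ (a :: A) B) = hookTableau a A B :=
    delta_hookTableau_cons_row hlt
  have hkeep : ∀ i j, hasCell (hookTableau a A B) i j →
      evacEntry (hookTableau r₀ (a :: A) B) i j = evacEntry (hookTableau a A B) i j :=
    fun _ _ => evacEntry_of_hasCell_delta hdel (by simp; omega)
  rw [evacuation_hookTableau_eq_evacEntry, hookTableau_inj] at hev
  obtain ⟨rfl, rfl, rfl⟩ := hev
  rw [evacuation_hookTableau_eq_evacEntry, hookTableau_inj, length_cons, range_succ, map_append,
    map_singleton, evacEntry_of_not_hasCell_delta (i := 0) (j := A.length + 1) hdel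
      (by simp [hasCell, hookTableau])]
  refine ⟨hkeep 0 0 (by simp [hasCell_hookTableau_zero]), ?_, ?_⟩
  · exact congrArg₂ _ (map_congr_left fun j hj => hkeep 0 (j + 1)
      ((hasCell_hookTableau_zero ..).mpr (by simpa using hj))) (by simp; omega)
  · exact map_congr_left fun i hi => hkeep (i + 1) 0
      ((hasCell_hookTableau_succ_zero ..).mpr (by simpa using hi))

lemma evacuation_hookTableau_cons_col {r₀ b e : ℕ} {A B X Y : List ℕ}
    (hlt : ∀ a ∈ A, b < a) (hev : evacuation (hookTableau b A B) = hookTableau e X Y) :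
    evacuation (hookTableau r₀ A (b :: B))
      = hookTableau e X (Y ++ [A.length + B.length + 2]) := by
  have hdel : delta (hookTableau r₀ A (b :: B)) = hookTableau b A B :=
    delta_hookTableau_cons_col hlt
  have hkeep : ∀ i j, hasCell (hookTableau b A B) i j →
      evacEntry (hookTableau r₀ A (b :: B)) i j = evacEntry (hookTableau b A B) i j :=
    fun _ _ => evacEntry_of_hasCell_delta hdel (by simp; omega)
  rw [evacuation_hookTableau_eq_evacEntry, hookTableau_inj] at hev
  obtain ⟨rfl, rfl, rfl⟩ := hev
  rw [evacuation_hookTableau_eq_evacEntry, hookTableau_inj, length_cons, range_succ, map_append,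
    map_singleton, evacEntry_of_not_hasCell_delta (i := B.length + 1) (j := 0) hdel
      (by simp [hasCell, hookTableau, getD_eq_getElem?_getD])]
  refine ⟨hkeep 0 0 (by simp [hasCell_hookTableau_zero]), ?_, ?_⟩
  · exact map_congr_left fun j hj => hkeep 0 (j + 1)
      ((hasCell_hookTableau_zero ..).mpr (by simpa using hj))
  · exact congrArg₂ _ (map_congr_left fun i hi => hkeep (i + 1) 0
      ((hasCell_hookTableau_succ_zero ..).mpr (by simpa using hi))) (by simp; omega)

lemma evacuation_singleton (r₀ : ℕ) : evacuation [[r₀]] = [[1]] := rfl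

lemma eq_cons_of_mem_of_forall_le {α : Type*} [Preorder α] {l : List α} {m : α}
    (hl : l.Pairwise (· < ·)) (hm : m ∈ l) (hle : ∀ x ∈ l, m ≤ x) : l = m :: l.tail := by
  obtain _ | ⟨x, l⟩ := l
  · simp at hm
  rcases mem_cons.mp hm with rfl | hm
  · rfl
  · exact absurd (hle x mem_cons_self) (not_le_of_gt (rel_of_pairwise_cons hl hm))

theorem evacuation_hookTableau {N m r₀ : ℕ} {A B : List ℕ} (hA : A.Pairwise (· < ·))
    (hB : B.Pairwise (· < ·)) (hperm : (A ++ B).Perm (range' m N)) :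
    evacuation (hookTableau r₀ A B)
      = hookTableau 1 (A.map (N + m + 1 - ·)).reverse (B.map (N + m + 1 - ·)).reverse := by
  induction N generalizing m r₀ A B with
  | zero =>
    obtain ⟨rfl, rfl⟩ := append_eq_nil_iff.mp (perm_nil.mp hperm)
    exact evacuation_singleton r₀
  | succ N ih =>
    have hmin : ∀ x ∈ A ++ B, m ≤ x := fun x hx => (mem_range'_1.mp (hperm.subset hx)).1
    have hm : m ∈ A ++ B := hperm.symm.subset (mem_range'_1.mpr ⟨le_rfl, by omega⟩)
    rcases mem_append.mp hm with hmA | hmB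
    · obtain ⟨A, rfl⟩ : ∃ A', A = m :: A' :=
        ⟨_, eq_cons_of_mem_of_forall_le hA hmA fun x hx => hmin x (mem_append_left _ hx)⟩
      have hperm' : (A ++ B).Perm (range' (m + 1) N) := by
        simpa [range'_succ] using hperm
      have hgt : ∀ b ∈ B, m < b := fun b hb =>
        (mem_range'_1.mp (hperm'.subset (mem_append_right _ hb))).1
      have hlen : A.length + B.length = N := by simpa using hperm'.length_eq
      rw [evacuation_hookTableau_cons_row hgt (ih (pairwise_cons.mp hA).2 hB hperm'), map_cons,
        reverse_cons, hlen, show N + (m + 1) + 1 = N + 1 + m + 1 by omega,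
        show N + 1 + m + 1 - m = N + 2 by omega]
    · obtain ⟨B, rfl⟩ : ∃ B', B = m :: B' :=
        ⟨_, eq_cons_of_mem_of_forall_le hB hmB fun x hx => hmin x (mem_append_right _ hx)⟩
      have hperm' : (A ++ B).Perm (range' (m + 1) N) := by
        simpa [range'_succ] using perm_middle.symm.trans hperm
      have hgt : ∀ a ∈ A, m < a := fun a ha =>
        (mem_range'_1.mp (hperm'.subset (mem_append_left _ ha))).1
      have hlen : A.length + B.length = N := by simpa using hperm'.length_eq
      rw [evacuation_hookTableau_cons_col hgt (ih hA (pairwise_cons.mp hB).2 hperm'), map_cons,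
        reverse_cons, hlen, show N + (m + 1) + 1 = N + 1 + m + 1 by omega,
        show N + 1 + m + 1 - m = N + 2 by omega]

lemma IsSYT.pairwise_hookTableau {r₀ : ℕ} {A B : List ℕ} (h : IsSYT (hookTableau r₀ A B)) :
    (r₀ :: A).Pairwise (· < ·) ∧ (r₀ :: B).Pairwise (· < ·) :=
  ⟨isChain_iff_pairwise.mp (h.2.2.1 _ mem_cons_self),
    isChain_iff_pairwise.mp (h.2.2.2.1 _ (transposeT_hookTableau r₀ A B ▸ mem_cons_self))⟩

lemma IsSYT.perm_hookTableau {r₀ : ℕ} {A B : List ℕ} (h : IsSYT (hookTableau r₀ A B)) :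
    r₀ = 1 ∧ (A ++ B).Perm (range' 2 (A.length + B.length)) := by
  have hperm : (r₀ :: (A ++ B)).Perm (range' 1 (A.length + B.length + 1)) := by
    simpa [flatten_hookTableau] using h.2.2.2.2
  have hr₀ : r₀ = 1 := by
    obtain ⟨hA, hB⟩ := h.pairwise_hookTableau
    have h1 := mem_range'_1.mp (hperm.subset mem_cons_self)
    rcases mem_cons.mp (hperm.symm.subset (mem_range'_1.mpr ⟨le_rfl, by omega⟩)) with h' | h'
    · exact h'.symm
    rcases mem_append.mp h' with h' | h'
    · exact absurd (rel_of_pairwise_cons hA h') (by omega)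
    · exact absurd (rel_of_pairwise_cons hB h') (by omega)
  subst hr₀
  exact ⟨rfl, by simpa [range'_succ] using hperm⟩

lemma reverse_map_eq_iff_forall_mem {α β : Type*} [LT α] [Preorder β]
    {A : List α} {B : List β} {g : α → β} (hA : A.Pairwise (· < ·))
    (hB : B.Pairwise (· < ·)) (hlen : A.length = B.length)
    (hg : ∀ a ∈ A, ∀ a' ∈ A, a < a' → g a' < g a) :
    (A.map g).reverse = B ↔ ∀ a ∈ A, g a ∈ B := by
  refine ⟨by rintro rfl a ha; simpa using ⟨a, ha, rfl⟩, fun h => ?_⟩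
  have hsorted : ((A.map g).reverse).Pairwise (· < ·) :=
    pairwise_reverse.mpr (pairwise_map.mpr (hA.imp_of_mem fun ha ha' => hg _ ha _ ha'))
  have hsub : (A.map g).reverse ⊆ B := by simpa [subset_def] using h
  have hperm := (subperm_of_subset hsorted.nodup hsub).perm_of_length_le (by simp [hlen])
  exact hperm.eq_of_pairwise' hsorted hB

lemma reverse_map_eq_of_involutive_on {α : Type*} {A B : List α} {g : α → α}
    (hg : ∀ a ∈ A, g (g a) = a) (h : (A.map g).reverse = B) : (B.map g).reverse = A := by
  subst h
  rw [map_reverse, reverse_reverse, map_map]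
  exact (map_congr_left hg).trans (map_id' A)

lemma forall_mem_cons_imp_iff {n : ℕ} {A B : List ℕ} (hA : ∀ a ∈ A, 2 ≤ a ∧ a ≤ n) :
    (∀ i, 1 < i → i ∈ 1 :: A → n - i + 2 ∈ 1 :: B) ↔ ∀ a ∈ A, n + 2 - a ∈ B := by
  refine ⟨fun h a ha => ?_, fun h i hi hiA => ?_⟩
  · have := hA a ha
    obtain h' | h' := mem_cons.mp (h a (by omega) (mem_cons_of_mem _ ha))
    · omega
    · rwa [show n + 2 - a = n - a + 2 by omega]
  · obtain rfl | hiA := mem_cons.mp hiA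
    · exact absurd hi (lt_irrefl 1)
    have := hA i hiA
    exact mem_cons_of_mem _ (by rw [show n - i + 2 = n + 2 - i by omega]; exact h i hiA)

end RSKPaper

open RSKPaper in
/-- for odd `n` and the symmetric hook shape, `ε(P)^T = P` iff
for every `i > 1`, `i` in the first row of `P` implies `n - i + 2` is in the
first column of `P`. -/
theorem stmt_14 (n : ℕ) (hn : Odd n) (T : List (List ℕ)) (hT : IsSYT T)
    (hs : shape T = hookShape n) :
    transposeT (evacuation T) = T ↔
      ∀ i : ℕ, 1 < i → i ∈ T.headD [] →
        (n - i + 2) ∈ T.filterMap (fun r => r.head?) := by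
  obtain ⟨k, rfl⟩ := hn
  have hshape : hookShape (2 * k + 1) = (k + 1) :: List.replicate k 1 := by
    simp only [hookShape]; congr 2 <;> omega
  obtain ⟨r₀, A, B, rfl, hA, hB⟩ := exists_eq_hookTableau (hs.trans hshape)
  obtain ⟨hsA, hsB⟩ := hT.pairwise_hookTableau
  obtain ⟨rfl, hperm⟩ := hT.perm_hookTableau
  have hbound : ∀ a ∈ A, 2 ≤ a ∧ a ≤ 2 * k + 1 := fun a ha => by
    have := List.mem_range'_1.mp (hperm.subset (List.mem_append_left _ ha)); omega
  have hinv : ∀ a ∈ A, 2 * k + 1 + 2 - (2 * k + 1 + 2 - a) = a := fun a ha => by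
    have := hbound a ha; omega
  have hanti : ∀ a ∈ A, ∀ a' ∈ A, a < a' → 2 * k + 1 + 2 - a' < 2 * k + 1 + 2 - a :=
    fun a ha a' ha' _ => by have := hbound a' ha'; omega
  rw [evacuation_hookTableau hsA.of_cons hsB.of_cons hperm, transposeT_hookTableau,
    hookTableau_inj, headD_hookTableau, filterMap_head?_hookTableau, hA, hB,
    show k + k + 2 + 1 = 2 * k + 1 + 2 by omega, eq_self, true_and,
    and_iff_right_of_imp (reverse_map_eq_of_involutive_on hinv),
    reverse_map_eq_iff_forall_mem hsA.of_cons hsB.of_cons (hA.trans hB.symm) hanti,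
    forall_mem_cons_imp_iff hbound]
end
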